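/- Let a > 0 and let τ ≥ 2 be an integer. Define α_t = 2/(a·(t+τ)) for integers t ≥ 0 (so that a·α_t ≤ 1 for all t ≥ 0). Let (r_t)_{t≥0} and (β_t)_{t≥0} be sequences of nonnegative real numbers satisfying r_{t+1} ≤ (1 − a·α_t)·r_t + β_t for all t ≥ 0. Then for all integers T ≥ t₀ ≥ 1: r_T ≤ (t₀ + τ − 1)²·r_{t₀}/(T + τ − 1)² + (Σ_{t=0}^{T−1} β_t·(t + τ)²)/(T + τ − 1)². -/

import Mathlib

/-!
Multiplying the recursion `r_{t+1} ≤ (1 - 2/(t+τ)) r_t + β_t` by `(t+τ)²` and using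
`(x - 2) x ≤ (x - 1)²` shows that `u_t = (t+τ-1)² r_t` satisfies `u_{t+1} ≤ u_t + β_t (t+τ)²`.
Telescoping from `t₀` to `T` and dividing by `(T+τ-1)² > 0` gives the bound.
-/

open Finset

lemma sq_mul_le_of_le_one_sub_two_div {x r r' b : ℝ} (hr : 0 ≤ r)
    (h : r' ≤ (1 - 2 / x) * r + b) :
    x ^ 2 * r' ≤ (x - 1) ^ 2 * r + b * x ^ 2 :=
  calc x ^ 2 * r' ≤ x ^ 2 * ((1 - 2 / x) * r + b) := by gcongr
    _ = (x - 2) * x * r + b * x ^ 2 := by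
      by_cases hx : x = 0
      · simp [hx]
      · field_simp
    _ ≤ (x - 1) ^ 2 * r + b * x ^ 2 := by
      gcongr
      nlinarith

theorem stmt_4 (a : ℝ) (ha : 0 < a) (τ : ℕ) (hτ : 2 ≤ τ)
    (r β : ℕ → ℝ) (hr : ∀ t, 0 ≤ r t) (hβ : ∀ t, 0 ≤ β t)
    (hrec : ∀ t : ℕ, r (t + 1) ≤ (1 - a * (2 / (a * ((t : ℝ) + τ)))) * r t + β t)
    (t₀ T : ℕ) (hT : t₀ ≤ T) :
    r T ≤ ((t₀ : ℝ) + τ - 1) ^ 2 * r t₀ / ((T : ℝ) + τ - 1) ^ 2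
      + (∑ t ∈ range T, β t * ((t : ℝ) + τ) ^ 2) / ((T : ℝ) + τ - 1) ^ 2 := by
  set u : ℕ → ℝ := fun t ↦ ((t : ℝ) + τ - 1) ^ 2 * r t
  set b : ℕ → ℝ := fun t ↦ β t * ((t : ℝ) + τ) ^ 2
  have hu : ∀ t, u (t + 1) ≤ 1 * u t + b t := fun t ↦ by
    have h := hrec t
    rw [← mul_div_assoc, mul_div_mul_left _ _ ha.ne'] at h
    simpa [u, b, add_right_comm] using sq_mul_le_of_le_one_sub_two_div (hr t) h
  -- the discrete Grönwall inequality with constant factor `1` is plain telescoping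
  have htele : u T ≤ u t₀ + ∑ t ∈ Ico t₀ T, b t := by
    simpa using discrete_gronwall_prod_general (fun t _ ↦ hu t) (fun _ _ ↦ zero_le_one) hT
  have hsum : ∑ t ∈ Ico t₀ T, b t ≤ ∑ t ∈ range T, b t :=
    sum_le_sum_of_subset_of_nonneg (range_eq_Ico T ▸ Ico_subset_Ico_left t₀.zero_le)
      fun t _ _ ↦ mul_nonneg (hβ t) (sq_nonneg _)
  have hpos : (0 : ℝ) < ((T : ℝ) + τ - 1) ^ 2 := by
    have : (2 : ℝ) ≤ τ := by exact_mod_cast hτ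
    have : (0 : ℝ) ≤ T := T.cast_nonneg
    exact pow_pos (by linarith) 2
  rw [← add_div, le_div_iff₀ hpos, mul_comm]
  exact htele.trans (add_le_add_right hsum _)
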